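/- arXiv:1303.6674 — 2 statements merged into one kernel-verified Lean document; each statement's English description precedes it below -/
import Mathlib

section
/- Let A be an N×N row-stochastic matrix, let J, K ⊆ {1,...,N} be subsets with |K| > |J|, and suppose that for every pair of subsets M₁, M₂ of equal cardinality, ∑_{i∉M₁}∑_{j∈M₂} A_{ij} ≤ Ψ ∑_{i∈M₁}∑_{j∉M₂} A_{ij} (balanced asymmetry with bound Ψ). Then ∑_{i∈K}∑_{j∉J} A_{ij} ≥ |K|/(1 + Ψ|K|) ≥ 1/(1+Ψ). -/
/-!
Put `S = ∑_{i ∈ K} ∑_{j ∉ J} A i j`. For `i ∈ K`, choose `M ⊆ K \ {i}` with `|M| = |J|`; since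
`i ∉ M`, balanced asymmetry for the pair `(M, J)` bounds the row mass `∑_{j ∈ J} A i j` by
`Ψ ∑_{i' ∈ M} ∑_{j ∉ J} A i' j ≤ Ψ S`. Summing over `K` and using row-stochasticity gives
`|K| - S ≤ |K| Ψ S`, i.e. `S ≥ |K| / (1 + Ψ |K|)`, and the latter is at least `1 / (1 + Ψ)`
because `|K| ≥ 1`.
-/

def RowStochastic {N : ℕ} (A : Matrix (Fin N) (Fin N) ℝ) : Prop :=
  (∀ i j, 0 ≤ A i j) ∧ ∀ i, ∑ j, A i j = 1

open Finset

section

variable {ι : Type*} [Fintype ι] [DecidableEq ι]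

def IsBalancedAsymmetric (A : Matrix ι ι ℝ) (Ψ : ℝ) : Prop :=
  ∀ M1 M2 : Finset ι, M1.card = M2.card →
    ∑ i ∈ M1ᶜ, ∑ j ∈ M2, A i j ≤ Ψ * ∑ i ∈ M1, ∑ j ∈ M2ᶜ, A i j

theorem sum_sum_eq_card_sub_sum_sum_compl {A : Matrix ι ι ℝ} (hrow : ∀ i, ∑ j, A i j = 1)
    (J K : Finset ι) :
    ∑ i ∈ K, ∑ j ∈ J, A i j = K.card - ∑ i ∈ K, ∑ j ∈ Jᶜ, A i j := by
  have hsplit : ∀ i, ∑ j ∈ J, A i j = 1 - ∑ j ∈ Jᶜ, A i j := fun i => by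
    rw [← hrow i, ← sum_add_sum_compl J (A i), add_sub_cancel_right]
  simp only [hsplit, sum_sub_distrib, sum_const, nsmul_one]

theorem IsBalancedAsymmetric.row_sum_le {A : Matrix ι ι ℝ} {Ψ : ℝ}
    (hbal : IsBalancedAsymmetric A Ψ) (hΨ : 0 ≤ Ψ) (hnn : ∀ i j, 0 ≤ A i j)
    {J K : Finset ι} (hJK : J.card < K.card) {i : ι} (hi : i ∈ K) :
    ∑ j ∈ J, A i j ≤ Ψ * ∑ i ∈ K, ∑ j ∈ Jᶜ, A i j := by
  have hcard : J.card ≤ (K.erase i).card := by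
    rw [card_erase_of_mem hi]; omega
  obtain ⟨M, hMK, hMcard⟩ := exists_subset_card_eq hcard
  have hiM : i ∈ Mᶜ := mem_compl.2 fun h => notMem_erase i K (hMK h)
  have hrows_nonneg : ∀ i', 0 ≤ ∑ j ∈ J, A i' j := fun i' => sum_nonneg fun j _ => hnn i' j
  calc ∑ j ∈ J, A i j ≤ ∑ i' ∈ Mᶜ, ∑ j ∈ J, A i' j :=
        single_le_sum (fun i' _ => hrows_nonneg i') hiM
    _ ≤ Ψ * ∑ i' ∈ M, ∑ j ∈ Jᶜ, A i' j := hbal M J hMcard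
    _ ≤ Ψ * ∑ i' ∈ K, ∑ j ∈ Jᶜ, A i' j := by
        gcongr
        · exact fun i' _ _ => sum_nonneg fun j _ => hnn i' j
        · exact hMK.trans (erase_subset i K)

theorem IsBalancedAsymmetric.card_div_le_sum_sum_compl {A : Matrix ι ι ℝ} {Ψ : ℝ}
    (hbal : IsBalancedAsymmetric A Ψ) (hΨ : 0 ≤ Ψ) (hnn : ∀ i j, 0 ≤ A i j)
    (hrow : ∀ i, ∑ j, A i j = 1) {J K : Finset ι} (hJK : J.card < K.card) :
    (K.card : ℝ) / (1 + Ψ * K.card) ≤ ∑ i ∈ K, ∑ j ∈ Jᶜ, A i j := by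
  set S := ∑ i ∈ K, ∑ j ∈ Jᶜ, A i j
  have hmass : (K.card : ℝ) - S ≤ K.card * (Ψ * S) := by
    calc (K.card : ℝ) - S = ∑ i ∈ K, ∑ j ∈ J, A i j :=
          (sum_sum_eq_card_sub_sum_sum_compl hrow J K).symm
      _ ≤ ∑ _i ∈ K, Ψ * S := sum_le_sum fun i hi => hbal.row_sum_le hΨ hnn hJK hi
      _ = K.card * (Ψ * S) := by rw [sum_const, nsmul_eq_mul]
  rw [div_le_iff₀ (by positivity)]
  linarith

end

theorem one_div_one_add_le_div_one_add_mul {k Ψ : ℝ} (hk : 1 ≤ k) (hΨ : 0 ≤ Ψ) :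
    1 / (1 + Ψ) ≤ k / (1 + Ψ * k) := by
  rw [div_le_div_iff₀ (by positivity) (by positivity)]
  nlinarith

theorem stmt3 {N : ℕ} (A : Matrix (Fin N) (Fin N) ℝ) (Ψ : ℝ) (hΨ : 0 ≤ Ψ)
    (hA : RowStochastic A) (J K : Finset (Fin N)) (hJK : J.card < K.card)
    (hbal : ∀ M1 M2 : Finset (Fin N), M1.card = M2.card →
      ∑ i ∈ M1ᶜ, ∑ j ∈ M2, A i j ≤ Ψ * ∑ i ∈ M1, ∑ j ∈ M2ᶜ, A i j) :
    (K.card : ℝ) / (1 + Ψ * K.card) ≤ ∑ i ∈ K, ∑ j ∈ Jᶜ, A i j ∧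
    1 / (1 + Ψ) ≤ (K.card : ℝ) / (1 + Ψ * K.card) := by
  have hbal' : IsBalancedAsymmetric A Ψ := hbal
  have hK : (1 : ℝ) ≤ K.card := by exact_mod_cast (Nat.zero_le _).trans_lt hJK
  exact ⟨hbal'.card_div_le_sum_sum_compl hΨ hA.1 hA.2 hJK,
    one_div_one_add_le_div_one_add_mul hK hΨ⟩
end

section
/- Let {A(n)} be a sequence of N×N row-stochastic matrices and let I ⊆ M = {1,...,N}, J a jet with J(n) ⊆ I for all n. Then for all n, U_n(J, M\J) ≤ U_n(J, I\J) + U_n(I, M\I), where U_n(S,T) denotes the one-step interaction ∑_{i∈S(n+1)}∑_{j∈T(n)} A_{ij}(n) + ∑_{i∈T(n+1)}∑_{j∈S(n)} A_{ij}(n) (with constant sets treated as constant jets). Consequently, if U(I, M\I) < ∞ and U(J, M\J) = ∞, then U(J, I\J) = ∞. -/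
open scoped ENNReal

/-- One-step interaction between jets `S` and `T` at time `n`. -/
def Un {N : ℕ} (A : ℕ → Matrix (Fin N) (Fin N) ℝ)
    (S T : ℕ → Finset (Fin N)) (n : ℕ) : ℝ :=
  (∑ i ∈ S (n + 1), ∑ j ∈ T n, A n i j) + (∑ i ∈ T (n + 1), ∑ j ∈ S n, A n i j)

theorem stmt13 {N : ℕ} (A : ℕ → Matrix (Fin N) (Fin N) ℝ)
    (hA : ∀ n, RowStochastic (A n))
    (I : Finset (Fin N)) (J : ℕ → Finset (Fin N)) (hJI : ∀ n, J n ⊆ I) :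
    (∀ n, Un A J (fun m => (J m)ᶜ) n ≤
        Un A J (fun m => I \ J m) n + Un A (fun _ => I) (fun _ => Iᶜ) n) ∧
    ((∑' n : ℕ, ENNReal.ofReal (Un A (fun _ => I) (fun _ => Iᶜ) n)) ≠ ⊤ →
     (∑' n : ℕ, ENNReal.ofReal (Un A J (fun m => (J m)ᶜ) n)) = ⊤ →
     (∑' n : ℕ, ENNReal.ofReal (Un A J (fun m => I \ J m) n)) = ⊤) := by
  have hsplit : ∀ (K : Finset (Fin N)), K ⊆ I → Kᶜ = (I \ K) ∪ Iᶜ := by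
    intro K hK
    ext j
    have hKI : j ∈ K → j ∈ I := fun hj => hK hj
    simp only [Finset.mem_compl, Finset.mem_union, Finset.mem_sdiff]
    tauto
  have hdis : ∀ (K : Finset (Fin N)), Disjoint (I \ K) Iᶜ := by
    intro K
    rw [Finset.disjoint_left]
    intro a ha hc
    exact (Finset.mem_compl.mp hc) (Finset.mem_sdiff.mp ha).1
  have key : ∀ n, Un A J (fun m => (J m)ᶜ) n ≤
      Un A J (fun m => I \ J m) n + Un A (fun _ => I) (fun _ => Iᶜ) n := by
    intro n
    have hpos := (hA n).1
    simp only [Un]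
    rw [hsplit (J n) (hJI n), hsplit (J (n + 1)) (hJI (n + 1)),
      Finset.sum_union (hdis (J (n + 1)))]
    simp only [Finset.sum_union (hdis (J n)), Finset.sum_add_distrib]
    have h1 : ∑ i ∈ J (n + 1), ∑ j ∈ Iᶜ, A n i j ≤ ∑ i ∈ I, ∑ j ∈ Iᶜ, A n i j :=
      Finset.sum_le_sum_of_subset_of_nonneg (hJI (n + 1))
        (fun i _ _ => Finset.sum_nonneg fun j _ => hpos i j)
    have h2 : ∑ i ∈ Iᶜ, ∑ j ∈ J n, A n i j ≤ ∑ i ∈ Iᶜ, ∑ j ∈ I, A n i j :=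
      Finset.sum_le_sum fun i _ =>
        Finset.sum_le_sum_of_subset_of_nonneg (hJI n) (fun j _ _ => hpos i j)
    linarith
  refine ⟨key, fun hfin hinf => ?_⟩
  by_contra h
  have h1 : (∑' n : ℕ, ENNReal.ofReal (Un A J (fun m => (J m)ᶜ) n)) ≤
      (∑' n : ℕ, ENNReal.ofReal (Un A J (fun m => I \ J m) n)) +
      (∑' n : ℕ, ENNReal.ofReal (Un A (fun _ => I) (fun _ => Iᶜ) n)) := by
    rw [← ENNReal.tsum_add]
    refine ENNReal.tsum_le_tsum fun n => ?_
    calc ENNReal.ofReal (Un A J (fun m => (J m)ᶜ) n)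
        ≤ ENNReal.ofReal (Un A J (fun m => I \ J m) n + Un A (fun _ => I) (fun _ => Iᶜ) n) :=
          ENNReal.ofReal_le_ofReal (key n)
      _ ≤ _ := ENNReal.ofReal_add_le
  rw [hinf, top_le_iff] at h1
  exact (ENNReal.add_ne_top.mpr ⟨h, hfin⟩) h1
end
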